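/- For every (a,b) with 1 ≤ a ≤ 2, 1 ≤ b < 2, ab < 2 (and 1 + a − ab ≠ 0), the Jacobian determinant of H_Δ(a,b) = (a⁴, (−2 + b + ab)/(a²(1 + a − ab))) equals 4a(a² + 1)/(1 + a − ab)², and this determinant is strictly greater than 4. -/

import Mathlib

/-!
The first component of `HDelta` depends on `a` alone, so its Jacobian matrix is triangular and
the determinant is `4 a³ · ∂g/∂b`. In `b` the second component `g` is a Möbius map
`(p b + q) / (r b + s)`, whose derivative is `(p s - q r) / (r b + s)²`; here
`p s - q r = a² (a² + 1)`. Finally `ab < 2 ≤ 1 + a` and `b ≥ 1` give `0 < 1 + a - ab ≤ 1`, while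
`a (a² + 1) ≥ 2`.
-/

/-- The renormalization operator H_Δ. -/
noncomputable def HDelta (p : ℝ × ℝ) : ℝ × ℝ :=
  (p.1 ^ 4, (-2 + p.2 + p.1 * p.2) / (p.1 ^ 2 * (1 + p.1 - p.1 * p.2)))

theorem LinearMap.det_prod_self_eq {R : Type*} [CommRing R] (f : R × R →ₗ[R] R × R) :
    LinearMap.det f = (f (1, 0)).1 * (f (0, 1)).2 - (f (0, 1)).1 * (f (1, 0)).2 := by
  rw [← LinearMap.det_toMatrix (Module.Basis.finTwoProd R), Matrix.det_fin_two]
  simp [LinearMap.toMatrix_apply, mul_comm]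

section Partial

variable {𝕜 G : Type*} [NontriviallyNormedField 𝕜] [NormedAddCommGroup G] [NormedSpace 𝕜 G]
  {f : 𝕜 × 𝕜 → G} {L : 𝕜 × 𝕜 →L[𝕜] G} {x y : 𝕜}

theorem HasFDerivAt.hasDerivAt_left (hf : HasFDerivAt f L (x, y)) :
    HasDerivAt (fun s => f (s, y)) (L (1, 0)) x := by
  simpa [Function.comp_def] using
    hf.comp_hasDerivAt x ((hasDerivAt_id x).prodMk (hasDerivAt_const x y))

theorem HasFDerivAt.hasDerivAt_right (hf : HasFDerivAt f L (x, y)) :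
    HasDerivAt (fun t => f (x, t)) (L (0, 1)) y := by
  simpa [Function.comp_def] using
    hf.comp_hasDerivAt y ((hasDerivAt_const y x).prodMk (hasDerivAt_id y))

end Partial

theorem HasFDerivAt.det_eq_of_hasDerivAt {𝕜 : Type*} [NontriviallyNormedField 𝕜]
    {f : 𝕜 × 𝕜 → 𝕜 × 𝕜} {L : 𝕜 × 𝕜 →L[𝕜] 𝕜 × 𝕜} {x y a b c d : 𝕜} (hf : HasFDerivAt f L (x, y))
    (ha : HasDerivAt (fun s => (f (s, y)).1) a x) (hb : HasDerivAt (fun t => (f (x, t)).1) b y)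
    (hc : HasDerivAt (fun s => (f (s, y)).2) c x) (hd : HasDerivAt (fun t => (f (x, t)).2) d y) :
    LinearMap.det (L : 𝕜 × 𝕜 →ₗ[𝕜] 𝕜 × 𝕜) = a * d - b * c := by
  rw [LinearMap.det_prod_self_eq, ha.unique hf.fst.hasDerivAt_left,
    hb.unique hf.fst.hasDerivAt_right, hc.unique hf.snd.hasDerivAt_left,
    hd.unique hf.snd.hasDerivAt_right]
  rfl

theorem hasDerivAt_div_affine {𝕜 : Type*} [NontriviallyNormedField 𝕜] {p q r s x : 𝕜}
    (hx : r * x + s ≠ 0) :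
    HasDerivAt (fun t => (p * t + q) / (r * t + s)) ((p * s - q * r) / (r * x + s) ^ 2) x := by
  have hnum : HasDerivAt (fun t => p * t + q) p x := by
    simpa using ((hasDerivAt_id x).const_mul p).add_const q
  have hden : HasDerivAt (fun t => r * t + s) r x := by
    simpa using ((hasDerivAt_id x).const_mul r).add_const s
  exact (hnum.div hden hx).congr_deriv (by ring)

theorem differentiableAt_HDelta {a b : ℝ} (ha : a ≠ 0) (hu : 1 + a - a * b ≠ 0) :
    DifferentiableAt ℝ HDelta (a, b) := by
  unfold HDelta
  fun_prop (disch := simp [ha, hu])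

theorem hasDerivAt_HDelta_snd_right {a b : ℝ} (ha : a ≠ 0) (hu : 1 + a - a * b ≠ 0) :
    HasDerivAt (fun t => (HDelta (a, t)).2) ((a ^ 2 + 1) / (a ^ 2 * (1 + a - a * b) ^ 2)) b := by
  have hden : -a ^ 3 * b + a ^ 2 * (1 + a) = a ^ 2 * (1 + a - a * b) := by ring
  have hmob : (fun t => (HDelta (a, t)).2) =
      fun t => ((1 + a) * t + -2) / (-a ^ 3 * t + a ^ 2 * (1 + a)) := by
    funext t
    simp only [HDelta]
    congr 1 <;> ring
  rw [hmob]
  refine (hasDerivAt_div_affine (hden ▸ by positivity)).congr_deriv ?_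
  rw [hden]
  field_simp
  ring

theorem four_lt_div_sq {a u : ℝ} (ha : 1 ≤ a) (hu0 : 0 < u) (hu1 : u ≤ 1) :
    4 < 4 * a * (a ^ 2 + 1) / u ^ 2 := by
  rw [lt_div_iff₀ (by positivity)]
  nlinarith [mul_le_mul hu1 hu1 hu0.le zero_le_one]

theorem HDelta_jacobian_det_general (a b : ℝ) (ha1 : 1 ≤ a)
    (hb1 : 1 ≤ b) (hab : a * b < 2) :
    ∃ L : ℝ × ℝ →L[ℝ] ℝ × ℝ, HasFDerivAt HDelta L (a, b) ∧
      LinearMap.det (L : ℝ × ℝ →ₗ[ℝ] ℝ × ℝ) =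
        4 * a * (a ^ 2 + 1) / (1 + a - a * b) ^ 2 ∧
      4 < LinearMap.det (L : ℝ × ℝ →ₗ[ℝ] ℝ × ℝ) := by
  have ha : a ≠ 0 := by positivity
  have hu0 : 0 < 1 + a - a * b := by nlinarith
  have hu1 : 1 + a - a * b ≤ 1 := by nlinarith
  have hf := (differentiableAt_HDelta ha hu0.ne').hasFDerivAt
  have hdet : LinearMap.det (fderiv ℝ HDelta (a, b) : ℝ × ℝ →ₗ[ℝ] ℝ × ℝ) =
      4 * a * (a ^ 2 + 1) / (1 + a - a * b) ^ 2 := by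
    rw [hf.det_eq_of_hasDerivAt (hasDerivAt_pow 4 a) (hasDerivAt_const b (a ^ 4))
      hf.snd.hasDerivAt_left (hasDerivAt_HDelta_snd_right ha hu0.ne')]
    field_simp
    ring
  exact ⟨_, hf, hdet, hdet ▸ four_lt_div_sq ha1 hu0 hu1⟩

theorem HDelta_jacobian_det (a b : ℝ) (ha1 : 1 ≤ a) (ha2 : a ≤ 2)
    (hb1 : 1 ≤ b) (hb2 : b < 2) (hab : a * b < 2) (hd : 1 + a - a * b ≠ 0) :
    ∃ L : ℝ × ℝ →L[ℝ] ℝ × ℝ, HasFDerivAt HDelta L (a, b) ∧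
      LinearMap.det (L : ℝ × ℝ →ₗ[ℝ] ℝ × ℝ) =
        4 * a * (a ^ 2 + 1) / (1 + a - a * b) ^ 2 ∧
      4 < LinearMap.det (L : ℝ × ℝ →ₗ[ℝ] ℝ × ℝ) :=
  HDelta_jacobian_det_general a b ha1 hb1 hab
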